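/- If g and h are conjugate elements of a finite group G, then for any representation φ of G, the operators D_g and D_h act identically on the polynomial det(Σ_{k∈G} φ(k) x_k): D_g det(Σ φ(k)x_k) = D_h det(Σ φ(k)x_k). -/

import Mathlib

open MvPolynomial

/-- The Frobenius differential operator `D_g f = ∑_{k ∈ G} x_{g⁻¹ k} ∂f/∂x_k`. -/
noncomputable def Dop {G : Type*} [Group G] [Fintype G] (g : G)
    (f : MvPolynomial G ℂ) : MvPolynomial G ℂ :=
  ∑ k : G, X (g⁻¹ * k) * pderiv k f

/-- The matrix `X = ∑_{k ∈ G} φ(k) x_k` with entries in the polynomial ring. -/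
noncomputable def repMatrix {G : Type*} [Group G] [Fintype G] {d : ℕ}
    (φ : G →* Matrix (Fin d) (Fin d) ℂ) : Matrix (Fin d) (Fin d) (MvPolynomial G ℂ) :=
  ∑ k : G, (X k : MvPolynomial G ℂ) • (φ k).map C

/-! `D_g` is the derivation sending `x_k` to `x_{g⁻¹k}`, so applied entrywise it turns
`X = ∑ φ(k) x_k` into `φ(g) X`. A derivation `D` with `D X = N X` satisfies
`D (det X) = tr N · det X`: read `D` as the ring hom `a ↦ a + D(a) ε` into dual numbers, which
sends `X` to `(1 + ε N) X`, and `det (1 + ε N) = 1 + ε tr N`. Hence `D_g det X = χ_φ(g) det X`,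
and characters are class functions. -/

open TrivSqZeroExt DualNumber

namespace Derivation

variable {R A : Type*} [CommRing R] [CommRing A] [Algebra R A]

def toDualNumber (D : Derivation R A A) : A →+* A[ε] where
  toFun a := inl a + inr (D a)
  map_one' := by ext <;> simp
  map_mul' a b := by ext <;> simp [D.leibniz, mul_comm]
  map_zero' := by ext <;> simp
  map_add' a b := by ext <;> simp

@[simp]
lemma snd_toDualNumber (D : Derivation R A A) (a : A) : (D.toDualNumber a).snd = D a := by
  simp [toDualNumber]

theorem map_det_of_map_eq_mul {n : Type*} [Fintype n] [DecidableEq n] (D : Derivation R A A)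
    {M N : Matrix n n A} (h : M.map D = N * M) : D M.det = N.trace * M.det := by
  let ι := inlHom A A
  have lift : M.map D.toDualNumber = (1 + (ε : A[ε]) • N.map ι) * M.map ι := by
    rw [add_mul, one_mul, smul_mul_assoc, ← Matrix.map_mul, ← h]
    ext i j <;> simp [toDualNumber, ι]
  calc D M.det = (D.toDualNumber M.det).snd := (snd_toDualNumber D _).symm
    _ = ((1 + (ε : A[ε]) • N.map ι).det * ι M.det).snd := by
      rw [RingHom.map_det, RingHom.map_det, RingHom.mapMatrix_apply, RingHom.mapMatrix_apply,
        lift, Matrix.det_mul]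
    _ = ((1 + ε * ι N.trace) * ι M.det).snd := by
      rw [Matrix.det_one_add_smul, eps_pow_two, mul_zero, add_zero, AddMonoidHom.map_trace,
        mul_comm ε]
    _ = N.trace * M.det := by simp [ι]

end Derivation

theorem Matrix.trace_eq_of_isConj {n R : Type*} [Fintype n] [DecidableEq n] [CommSemiring R]
    {A B : Matrix n n R} (h : IsConj A B) : A.trace = B.trace := by
  obtain ⟨c, hc⟩ := h
  rw [← Matrix.trace_units_conj c A, hc.eq, Matrix.mul_assoc, Units.mul_inv, Matrix.mul_one]

section Frobenius

variable {G : Type*} [Group G] [Fintype G]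

noncomputable def frobeniusDerivation (g : G) :
    Derivation ℂ (MvPolynomial G ℂ) (MvPolynomial G ℂ) :=
  ∑ k : G, (X (g⁻¹ * k) : MvPolynomial G ℂ) • pderiv k

lemma frobeniusDerivation_apply (g : G) (f : MvPolynomial G ℂ) :
    frobeniusDerivation g f = Dop g f := by
  rw [frobeniusDerivation, ← Derivation.coeFnAddMonoidHom_apply, map_sum, Finset.sum_apply]
  rfl

lemma frobeniusDerivation_X (g k : G) :
    frobeniusDerivation g (X k) = X (g⁻¹ * k) := by
  classical
  simp [frobeniusDerivation_apply, Dop, pderiv_X, Pi.single_apply]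

lemma repMatrix_map_frobeniusDerivation {d : ℕ} (φ : G →* Matrix (Fin d) (Fin d) ℂ) (g : G) :
    (repMatrix φ).map (frobeniusDerivation g) = (φ g).map C * repMatrix φ := by
  have summand (k : G) : ((X k : MvPolynomial G ℂ) • (φ k).map C).map (frobeniusDerivation g)
      = (X (g⁻¹ * k) : MvPolynomial G ℂ) • (φ k).map C := by
    ext i j : 1
    simp only [Matrix.map_apply, Matrix.smul_apply, smul_eq_mul, Derivation.leibniz,
      derivation_C, frobeniusDerivation_X, mul_zero, zero_add, mul_comm]
  calc (repMatrix φ).map (frobeniusDerivation g)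
      = ∑ k : G, (X (g⁻¹ * k) : MvPolynomial G ℂ) • (φ k).map C := by
        simp only [repMatrix, ← summand]
        exact map_sum (frobeniusDerivation g).toAddMonoidHom.mapMatrix _ _
    _ = ∑ k : G, (X k : MvPolynomial G ℂ) • (φ (g * k)).map C :=
        Fintype.sum_equiv (Equiv.mulLeft g⁻¹) _ _ fun k => by simp
    _ = (φ g).map C * repMatrix φ := by
        simp [repMatrix, Finset.mul_sum, map_mul, Matrix.map_mul]

theorem Dop_det_repMatrix {d : ℕ} (φ : G →* Matrix (Fin d) (Fin d) ℂ) (g : G) :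
    Dop g (repMatrix φ).det = C (φ g).trace * (repMatrix φ).det := by
  rw [← frobeniusDerivation_apply, (frobeniusDerivation g).map_det_of_map_eq_mul
    (repMatrix_map_frobeniusDerivation φ g), AddMonoidHom.map_trace]

end Frobenius

theorem Dop_conj_eq_general {G : Type*} [Group G] [Fintype G] {d : ℕ}
    (φ : G →* Matrix (Fin d) (Fin d) ℂ) (g h : G) (hconj : IsConj g h) :
    Dop g (repMatrix φ).det = Dop h (repMatrix φ).det := by
  rw [Dop_det_repMatrix, Dop_det_repMatrix, Matrix.trace_eq_of_isConj (φ.map_isConj hconj)]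

theorem Dop_conj_eq {G : Type*} [Group G] [Fintype G] [DecidableEq G] {d : ℕ}
    (φ : G →* Matrix (Fin d) (Fin d) ℂ) (g h : G) (hconj : IsConj g h) :
    Dop g (repMatrix φ).det = Dop h (repMatrix φ).det :=
  Dop_conj_eq_general φ g h hconj
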